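/- arXiv:0912.3951 — 5 statements merged into one kernel-verified Lean document; each statement's English description precedes it below -/
import Mathlib

section
/- For any point z in the polytope 𝒫, the sublevel half-space ℋ⁻(z) = { x ∈ 𝒫 : βᵀx ≤ βᵀz } is 𝒫-invariant, and likewise the strict sublevel set { x ∈ 𝒫 : βᵀx < βᵀz } intersected with 𝒫 is 𝒫-invariant. -/
open Matrix Set

/-- A trajectory of the control system `ẋ = f(x,u)` on the time interval `[0,T]`. -/
def IsTrajOn {n m : ℕ} (f : (Fin n → ℝ) → (Fin m → ℝ) → (Fin n → ℝ))
    (u : ℝ → Fin m → ℝ) (x : ℝ → Fin n → ℝ) (T : ℝ) : Prop :=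
  ∀ t ∈ Set.Icc (0:ℝ) T, HasDerivAt x (f (x t) (u t)) t

/-- `A` is `Ω`-invariant. -/
def OmegaInvariant {n m : ℕ} (f : (Fin n → ℝ) → (Fin m → ℝ) → (Fin n → ℝ))
    (Ω A : Set (Fin n → ℝ)) : Prop :=
  ∀ (u : ℝ → Fin m → ℝ) (x : ℝ → Fin n → ℝ) (T : ℝ), 0 ≤ T →
    IsTrajOn f u x T → x 0 ∈ A → (∀ t ∈ Set.Icc (0:ℝ) T, x t ∈ Ω) →
    ∀ t ∈ Set.Icc (0:ℝ) T, x t ∈ A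

/-! Since `β` is orthogonal to `Im B`, `βᵀẋ = βᵀ(Ax + a) ≤ 0` on `𝒫` whatever the control, so
`βᵀx` is nonincreasing along every trajectory while it stays in `𝒫`. Hence no sublevel set of
`βᵀx`, strict or not, can be left before `𝒫` is. -/

lemma HasDerivAt.dotProduct_const_left {n : ℕ} (β : Fin n → ℝ) {x : ℝ → Fin n → ℝ}
    {v : Fin n → ℝ} {t : ℝ} (h : HasDerivAt x v t) :
    HasDerivAt (fun s => β ⬝ᵥ x s) (β ⬝ᵥ v) t := by
  simp only [dotProduct]
  exact HasDerivAt.fun_sum fun i _ => ((hasDerivAt_pi.mp h) i).const_mul (β i)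

section

variable {n m : ℕ} {f : (Fin n → ℝ) → (Fin m → ℝ) → (Fin n → ℝ)} {Ω : Set (Fin n → ℝ)}
  {β : Fin n → ℝ}

lemma IsTrajOn.antitoneOn_dotProduct (hf : ∀ x ∈ Ω, ∀ u, β ⬝ᵥ f x u ≤ 0)
    {u : ℝ → Fin m → ℝ} {x : ℝ → Fin n → ℝ} {T : ℝ} (htraj : IsTrajOn f u x T)
    (hstay : ∀ t ∈ Icc (0:ℝ) T, x t ∈ Ω) :
    AntitoneOn (fun t => β ⬝ᵥ x t) (Icc (0:ℝ) T) := by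
  have hderiv : ∀ t ∈ Icc (0:ℝ) T,
      HasDerivAt (fun s => β ⬝ᵥ x s) (β ⬝ᵥ f (x t) (u t)) t :=
    fun t ht => (htraj t ht).dotProduct_const_left β
  refine antitoneOn_of_hasDerivWithinAt_nonpos (convex_Icc 0 T)
    (fun t ht => (hderiv t ht).continuousAt.continuousWithinAt)
    (fun t ht => (hderiv t (interior_subset ht)).hasDerivWithinAt) fun t ht => ?_
  exact hf _ (hstay t (interior_subset ht)) _

theorem omegaInvariant_dotProduct_preimage_of_isLowerSet (hf : ∀ x ∈ Ω, ∀ u, β ⬝ᵥ f x u ≤ 0)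
    {S : Set ℝ} (hS : IsLowerSet S) : OmegaInvariant f Ω {x ∈ Ω | β ⬝ᵥ x ∈ S} := by
  intro u x T hT htraj hx₀ hstay t ht
  have hle : β ⬝ᵥ x t ≤ β ⬝ᵥ x 0 :=
    htraj.antitoneOn_dotProduct hf hstay ⟨le_rfl, hT⟩ ht ht.1
  exact ⟨hstay t ht, hS hle hx₀.2⟩

end

theorem sublevel_invariant_general {n m : ℕ}
    (A : Matrix (Fin n) (Fin n) ℝ) (a : Fin n → ℝ) (B : Matrix (Fin n) (Fin m) ℝ)
    (P : Set (Fin n → ℝ))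
    (β : Fin n → ℝ)
    (hβB : ∀ w : Fin m → ℝ, β ⬝ᵥ B.mulVec w = 0)
    (hβsign : ∀ x ∈ P, β ⬝ᵥ (A.mulVec x + a) ≤ 0)
    (z : Fin n → ℝ) :
    OmegaInvariant (fun x u => A.mulVec x + a + B.mulVec u) P
        {x ∈ P | β ⬝ᵥ x ≤ β ⬝ᵥ z} ∧
      OmegaInvariant (fun x u => A.mulVec x + a + B.mulVec u) P
        {x ∈ P | β ⬝ᵥ x < β ⬝ᵥ z} := by
  have hf : ∀ x ∈ P, ∀ u, β ⬝ᵥ (A.mulVec x + a + B.mulVec u) ≤ 0 := by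
    intro x hx u
    rw [dotProduct_add, hβB, add_zero]
    exact hβsign x hx
  exact ⟨omegaInvariant_dotProduct_preimage_of_isLowerSet hf (isLowerSet_Iic _),
    omegaInvariant_dotProduct_preimage_of_isLowerSet hf (isLowerSet_Iio _)⟩

/-- For `z ∈ 𝒫`, the sublevel half-space `ℋ⁻(z) = {x ∈ 𝒫 : βᵀx ≤ βᵀz}` is `𝒫`-invariant,
and so is the strict sublevel set `{x ∈ 𝒫 : βᵀx < βᵀz}`. -/
theorem sublevel_invariant {n m : ℕ}
    (A : Matrix (Fin n) (Fin n) ℝ) (a : Fin n → ℝ) (B : Matrix (Fin n) (Fin m) ℝ)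
    (hBrank : B.rank = n - 1)
    (V : Finset (Fin n → ℝ)) (P : Set (Fin n → ℝ))
    (hP : P = convexHull ℝ (V : Set (Fin n → ℝ)))
    (hPfull : (interior P).Nonempty)
    (O : Set (Fin n → ℝ)) (hO : O = {x | A.mulVec x + a ∈ Set.range B.mulVec})
    (hdisj : interior P ∩ O = ∅)
    (β : Fin n → ℝ) (hβ1 : β ⬝ᵥ β = 1)
    (hβB : ∀ w : Fin m → ℝ, β ⬝ᵥ B.mulVec w = 0)
    (hβsign : ∀ x ∈ P, β ⬝ᵥ (A.mulVec x + a) ≤ 0)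
    (z : Fin n → ℝ) (hz : z ∈ P) :
    OmegaInvariant (fun x u => A.mulVec x + a + B.mulVec u) P
        {x ∈ P | β ⬝ᵥ x ≤ β ⬝ᵥ z} ∧
      OmegaInvariant (fun x u => A.mulVec x + a + B.mulVec u) P
        {x ∈ P | β ⬝ᵥ x < β ⬝ᵥ z} :=
  sublevel_invariant_general A a B P β hβB hβsign z
end

section
/- Let z ∈ 𝒫 and suppose ℬ_z ∩ 𝒫 ⊆ 𝒪 (the slice of 𝒫 by the hyperplane through z parallel to ℬ consists entirely of possible equilibria). Then both ℬ_z ∩ 𝒫 and 𝒫 \ ℬ_z are 𝒫-invariant sets. -/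
open Matrix Set

section Gronwall

variable {E : Type*} [NormedAddCommGroup E] [NormedSpace ℝ E]

theorem eq_zero_of_norm_deriv_le_mul_norm {φ φ' : ℝ → E} {K a b : ℝ}
    (hd : ∀ t ∈ Icc a b, HasDerivAt φ (φ' t) t) (hb : ∀ t ∈ Icc a b, ‖φ' t‖ ≤ K * ‖φ t‖)
    (ha : φ a = 0) : ∀ t ∈ Icc a b, φ t = 0 :=
  eq_zero_of_abs_deriv_le_mul_abs_self_of_eq_zero_right
    (fun t ht => (hd t ht).continuousAt.continuousWithinAt)
    (fun t ht => (hd t (Ico_subset_Icc_self ht)).hasDerivWithinAt) ha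
    (fun t ht => hb t (Ico_subset_Icc_self ht))

theorem ne_zero_of_norm_deriv_le_mul_norm {φ φ' : ℝ → E} {K a b : ℝ}
    (hd : ∀ t ∈ Icc a b, HasDerivAt φ (φ' t) t) (hb : ∀ t ∈ Icc a b, ‖φ' t‖ ≤ K * ‖φ t‖)
    (ha : φ a ≠ 0) : ∀ t ∈ Icc a b, φ t ≠ 0 := by
  intro t ht hφt
  have hmem : ∀ s ∈ Icc (-t) (-a), -s ∈ Icc a b :=
    fun s hs => ⟨by linarith [hs.2], by linarith [hs.1, ht.2]⟩
  have hd' : ∀ s ∈ Icc (-t) (-a), HasDerivAt (fun s => φ (-s)) (-φ' (-s)) s := fun s hs => by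
    simpa [Function.comp_def] using (hd (-s) (hmem s hs)).scomp s (hasDerivAt_neg s)
  have hb' : ∀ s ∈ Icc (-t) (-a), ‖-φ' (-s)‖ ≤ K * ‖φ (-s)‖ := fun s hs => by
    simpa only [norm_neg] using hb (-s) (hmem s hs)
  have := eq_zero_of_norm_deriv_le_mul_norm hd' hb' (by simpa using hφt) (-a)
    ⟨neg_le_neg ht.1, le_rfl⟩
  exact ha (by simpa using this)

end Gronwall

section ConstantSign

variable {E : Type*} [TopologicalSpace E] [AddCommGroup E] [Module ℝ E]
  [IsTopologicalAddGroup E] [ContinuousSMul ℝ E] {P : Set E} {g : E → ℝ}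

theorem Convex.forall_nonneg_of_interior_ne_zero (hP : Convex ℝ P) (hg : Continuous g)
    (hne : ∀ q ∈ interior P, g q ≠ 0) {p : E} (hp : p ∈ interior P) (hgp : 0 < g p) :
    ∀ y ∈ P, 0 ≤ g y := by
  have hpos : ∀ q ∈ interior P, 0 ≤ g q := by
    intro q hq
    by_contra! hgq
    obtain ⟨r, hr, hgr⟩ := hP.interior.isPreconnected.intermediate_value hq hp
      hg.continuousOn ⟨hgq.le, hgp.le⟩
    exact hne r hr hgr
  intro y hy
  have hy' : y ∈ closure (interior P) := by
    rw [hP.closure_interior_eq_closure_of_nonempty_interior ⟨p, hp⟩]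
    exact subset_closure hy
  exact closure_minimal (fun q hq => hpos q hq) (isClosed_le continuous_const hg) hy'

theorem Convex.forall_nonneg_or_forall_nonpos_of_interior_ne_zero (hP : Convex ℝ P)
    (hg : Continuous g) (hPint : (interior P).Nonempty) (hne : ∀ q ∈ interior P, g q ≠ 0) :
    (∀ y ∈ P, 0 ≤ g y) ∨ ∀ y ∈ P, g y ≤ 0 := by
  obtain ⟨p, hp⟩ := hPint
  rcases (hne p hp).lt_or_gt with hgp | hgp
  · right
    intro y hy
    have := hP.forall_nonneg_of_interior_ne_zero hg.neg (fun q hq => neg_ne_zero.mpr (hne q hq))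
      hp (neg_pos.mpr hgp) y hy
    exact neg_nonneg.mp this
  · exact Or.inl (hP.forall_nonneg_of_interior_ne_zero hg hne hp hgp)

end ConstantSign

section VertexBound

variable {E : Type*} [AddCommGroup E] [Module ℝ E]

theorem exists_abs_le_mul_on_convexHull (g h : E →ᵃ[ℝ] ℝ) {V : Finset E}
    (hg : ∀ v ∈ V, 0 ≤ g v) (hgh : ∀ v ∈ V, g v = 0 → h v = 0) :
    ∃ K, ∀ y ∈ convexHull ℝ (V : Set E), |h y| ≤ K * g y := by
  -- a vertex with `g v = 0` contributes `0` (division by zero), and there `h v = 0` as well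
  set K := ∑ v ∈ V, |h v| / g v
  have hvertex : (V : Set E) ⊆ {y | |h y| ≤ K * g y} := by
    intro v hv
    rcases (hg v hv).eq_or_lt with hgv | hgv
    · simp [hgh v hv hgv.symm, ← hgv]
    · calc |h v| = |h v| / g v * g v := (div_mul_cancel₀ _ hgv.ne').symm
        _ ≤ K * g v := by
          gcongr
          exact Finset.single_le_sum (f := fun v => |h v| / g v)
            (fun w hw => div_nonneg (abs_nonneg _) (hg w hw)) hv
  have hconvex : Convex ℝ {y | |h y| ≤ K * g y} := by
    have hS : {y | |h y| ≤ K * g y} = (K • g - h) ⁻¹' Ici 0 ∩ (K • g + h) ⁻¹' Ici 0 := by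
      ext y
      simp only [mem_ofPred_eq, abs_le, mem_inter_iff, mem_preimage, mem_Ici, AffineMap.coe_sub,
        AffineMap.coe_add, AffineMap.coe_smul, Pi.sub_apply, Pi.add_apply, Pi.smul_apply,
        smul_eq_mul]
      constructor <;> rintro ⟨h₁, h₂⟩ <;> constructor <;> linarith
    rw [hS]
    exact ((convex_Ici 0).affine_preimage _).inter ((convex_Ici 0).affine_preimage _)
  exact ⟨K, fun y hy => convexHull_min hvertex hconvex hy⟩

theorem exists_abs_le_mul_abs_on_convexHull (g h : E →ᵃ[ℝ] ℝ) {V : Finset E}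
    (hsign : (∀ y ∈ convexHull ℝ (V : Set E), 0 ≤ g y) ∨ ∀ y ∈ convexHull ℝ (V : Set E), g y ≤ 0)
    (hgh : ∀ v ∈ V, g v = 0 → h v = 0) :
    ∃ K, ∀ y ∈ convexHull ℝ (V : Set E), |h y| ≤ K * |g y| := by
  have hV : ∀ v ∈ V, v ∈ convexHull ℝ (V : Set E) := fun v hv => subset_convexHull ℝ _ hv
  rcases hsign with hg | hg
  · obtain ⟨K, hK⟩ := exists_abs_le_mul_on_convexHull g h (fun v hv => hg v (hV v hv)) hgh
    exact ⟨K, fun y hy => by rw [abs_of_nonneg (hg y hy)]; exact hK y hy⟩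
  · obtain ⟨K, hK⟩ := exists_abs_le_mul_on_convexHull (-g) h
      (fun v hv => by simpa using hg v (hV v hv)) (fun v hv hgv => hgh v hv (by simpa using hgv))
    exact ⟨K, fun y hy => by simpa [abs_of_nonpos (hg y hy)] using hK y hy⟩

end VertexBound

theorem omegaInvariant_levelSet_of_abs_deriv_le {n m : ℕ}
    {f : (Fin n → ℝ) → (Fin m → ℝ) → (Fin n → ℝ)} {Ω : Set (Fin n → ℝ)}
    (ℓ : (Fin n → ℝ) →L[ℝ] ℝ) (c K : ℝ) (hbound : ∀ y ∈ Ω, ∀ w, |ℓ (f y w)| ≤ K * |ℓ y - c|) :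
    OmegaInvariant f Ω ({y | ℓ y = c} ∩ Ω) ∧ OmegaInvariant f Ω (Ω \ {y | ℓ y = c}) := by
  have hderiv : ∀ u x T, IsTrajOn f u x T → (∀ t ∈ Icc 0 T, x t ∈ Ω) →
      (∀ t ∈ Icc 0 T, HasDerivAt (fun s => ℓ (x s) - c) (ℓ (f (x t) (u t))) t) ∧
        ∀ t ∈ Icc 0 T, ‖ℓ (f (x t) (u t))‖ ≤ K * ‖ℓ (x t) - c‖ :=
    fun u x T hx hΩ => ⟨fun t ht => (ℓ.hasFDerivAt.comp_hasDerivAt t (hx t ht)).sub_const c,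
      fun t ht => hbound _ (hΩ t ht) _⟩
  constructor
  · intro u x T _ hx hx0 hΩ t ht
    obtain ⟨hd, hb⟩ := hderiv u x T hx hΩ
    exact ⟨sub_eq_zero.mp (eq_zero_of_norm_deriv_le_mul_norm hd hb (sub_eq_zero.mpr hx0.1) t ht),
      hΩ t ht⟩
  · intro u x T _ hx hx0 hΩ t ht
    obtain ⟨hd, hb⟩ := hderiv u x T hx hΩ
    exact ⟨hΩ t ht, fun hxt => ne_zero_of_norm_deriv_le_mul_norm hd hb
      (sub_ne_zero.mpr hx0.2) t ht (sub_eq_zero.mpr hxt)⟩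

theorem slice_invariant_general {n m : ℕ}
    (A : Matrix (Fin n) (Fin n) ℝ) (a : Fin n → ℝ) (B : Matrix (Fin n) (Fin m) ℝ)
    (V : Finset (Fin n → ℝ)) (P : Set (Fin n → ℝ))
    (hP : P = convexHull ℝ (V : Set (Fin n → ℝ)))
    (hPfull : (interior P).Nonempty)
    (O : Set (Fin n → ℝ)) (hO : O = {x | A.mulVec x + a ∈ Set.range B.mulVec})
    (hdisj : interior P ∩ O = ∅)
    (β : Fin n → ℝ)
    (hβB : ∀ w : Fin m → ℝ, β ⬝ᵥ B.mulVec w = 0)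
    (z : Fin n → ℝ)
    (hslice : {x : Fin n → ℝ | β ⬝ᵥ x = β ⬝ᵥ z} ∩ P ⊆ O) :
    OmegaInvariant (fun x u => A.mulVec x + a + B.mulVec u) P
        ({x : Fin n → ℝ | β ⬝ᵥ x = β ⬝ᵥ z} ∩ P) ∧
      OmegaInvariant (fun x u => A.mulVec x + a + B.mulVec u) P
        (P \ {x : Fin n → ℝ | β ⬝ᵥ x = β ⬝ᵥ z}) := by
  subst hP hO
  set ℓ : (Fin n → ℝ) →ₗ[ℝ] ℝ := dotProductBilin ℝ ℝ β
  set g : (Fin n → ℝ) →ᵃ[ℝ] ℝ := ℓ.toAffineMap - AffineMap.const ℝ _ (β ⬝ᵥ z)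
  set h : (Fin n → ℝ) →ᵃ[ℝ] ℝ := (ℓ ∘ₗ A.mulVecLin).toAffineMap + AffineMap.const ℝ _ (β ⬝ᵥ a)
  have hh : ∀ y w, β ⬝ᵥ (A *ᵥ y + a + B *ᵥ w) = h y := fun y w => by
    simp [h, ℓ, dotProduct_add, hβB]
  have hgh : ∀ y ∈ convexHull ℝ (V : Set (Fin n → ℝ)), g y = 0 → h y = 0 := by
    intro y hy hgy
    obtain ⟨w, hw⟩ := hslice ⟨sub_eq_zero.mp hgy, hy⟩
    rw [← hh y 0, mulVec_zero, add_zero, ← hw, hβB]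
  have hne : ∀ q ∈ interior (convexHull ℝ (V : Set (Fin n → ℝ))), g q ≠ 0 :=
    fun q hq hgq => hdisj.subset ⟨hq, hslice ⟨sub_eq_zero.mp hgq, interior_subset hq⟩⟩
  obtain ⟨K, hK⟩ := exists_abs_le_mul_abs_on_convexHull g h
    ((convex_convexHull ℝ _).forall_nonneg_or_forall_nonpos_of_interior_ne_zero
      g.continuous_of_finiteDimensional hPfull hne)
    (fun v hv => hgh v (subset_convexHull ℝ _ hv))
  exact omegaInvariant_levelSet_of_abs_deriv_le (LinearMap.toContinuousLinearMap ℓ) (β ⬝ᵥ z) K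
    fun y hy w => show |β ⬝ᵥ _| ≤ K * |β ⬝ᵥ y - β ⬝ᵥ z| from hh y w ▸ hK y hy

/-- If the slice `ℬ_z ∩ 𝒫` lies entirely in `𝒪`, then both `ℬ_z ∩ 𝒫` and `𝒫 \ ℬ_z`
are `𝒫`-invariant. -/
theorem slice_invariant {n m : ℕ}
    (A : Matrix (Fin n) (Fin n) ℝ) (a : Fin n → ℝ) (B : Matrix (Fin n) (Fin m) ℝ)
    (hBrank : B.rank = n - 1)
    (V : Finset (Fin n → ℝ)) (P : Set (Fin n → ℝ))
    (hP : P = convexHull ℝ (V : Set (Fin n → ℝ)))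
    (hPfull : (interior P).Nonempty)
    (O : Set (Fin n → ℝ)) (hO : O = {x | A.mulVec x + a ∈ Set.range B.mulVec})
    (hdisj : interior P ∩ O = ∅)
    (β : Fin n → ℝ) (hβ1 : β ⬝ᵥ β = 1)
    (hβB : ∀ w : Fin m → ℝ, β ⬝ᵥ B.mulVec w = 0)
    (hβsign : ∀ x ∈ P, β ⬝ᵥ (A.mulVec x + a) ≤ 0)
    (z : Fin n → ℝ) (hz : z ∈ P)
    (hslice : {x : Fin n → ℝ | β ⬝ᵥ x = β ⬝ᵥ z} ∩ P ⊆ O) :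
    OmegaInvariant (fun x u => A.mulVec x + a + B.mulVec u) P
        ({x : Fin n → ℝ | β ⬝ᵥ x = β ⬝ᵥ z} ∩ P) ∧
      OmegaInvariant (fun x u => A.mulVec x + a + B.mulVec u) P
        (P \ {x : Fin n → ℝ | β ⬝ᵥ x = β ⬝ᵥ z}) :=
  slice_invariant_general A a B V P hP hPfull O hO hdisj β hβB z hslice
end

section
/- Let y ≠ z be points of the polytope 𝒫 with z, y ∉ 𝒪 and βᵀy < βᵀz. Then z can reach y along the line segment l joining them: there is a (state-dependent) control under which the trajectory from z remains in l and reaches y in finite time. -/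
/-!
Since `Im B = β^⊥`, a velocity `v` is admissible at `x` iff `βᵀ(v - (Ax + a)) = 0`, and
`g x = βᵀ(Ax + a)` is negative at `z` and `y` because they lie outside `𝒪`. Along the segment
`z + r (y - z)` the function `g` is affine in `r`, so moving with velocity `λ (y - z)` forces
`λ = g x / βᵀ(y - z) > 0`: the parameter obeys the scalar linear ODE `r' = l₀ + (l₁ - l₀) r`
with `l₀, l₁ > 0`, whose explicit solution from `r = 0` reaches `r = 1` in finite time.
-/

open Matrix Set

/-- `x₀` can reach `Ωf` with constraint in `Ω`. -/
def CanReach {n m : ℕ} (f : (Fin n → ℝ) → (Fin m → ℝ) → (Fin n → ℝ))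
    (Ω Ωf : Set (Fin n → ℝ)) (x₀ : Fin n → ℝ) : Prop :=
  ∃ (u : ℝ → Fin m → ℝ) (x : ℝ → Fin n → ℝ) (T : ℝ), 0 ≤ T ∧
    IsTrajOn f u x T ∧ x 0 = x₀ ∧ (∀ t ∈ Set.Icc (0:ℝ) T, x t ∈ Ω) ∧ x T ∈ Ωf

theorem range_mulVec_eq_setOf_dotProduct_eq_zero {K ι κ : Type*} [Field K] [Fintype ι]
    [Fintype κ] {B : Matrix κ ι K} (hB : B.rank = Fintype.card κ - 1) {β : κ → K}
    (hβ : β ≠ 0) (hβB : ∀ w, β ⬝ᵥ B *ᵥ w = 0) :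
    range B.mulVec = {w | β ⬝ᵥ w = 0} := by
  classical
  have hφ : dotProductBilin K K β ≠ 0 := by
    obtain ⟨i, hi⟩ := Function.ne_iff.mp hβ
    refine fun h => hi ?_
    simpa [dotProduct_single] using LinearMap.congr_fun h (Pi.single i 1)
  suffices LinearMap.range B.mulVecLin = LinearMap.ker (dotProductBilin K K β) from
    congrArg SetLike.coe this
  refine Submodule.eq_of_le_of_finrank_eq ?_ ?_
  · rintro _ ⟨w, rfl⟩
    exact hβB w
  · have := Module.Dual.finrank_ker_add_one_of_ne_zero hφ
    rw [Module.finrank_fintype_fun_eq_card] at this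
    rw [← Matrix.rank, hB]
    omega

theorem exists_strictMono_hasDerivAt_affine {l₀ l₁ : ℝ} (h₀ : 0 < l₀) (h₁ : 0 < l₁) :
    ∃ (s : ℝ → ℝ) (T : ℝ), StrictMono s ∧ s 0 = 0 ∧ s T = 1 ∧
      ∀ t, HasDerivAt s (l₀ + (l₁ - l₀) * s t) t := by
  rcases eq_or_ne l₁ l₀ with h | hγ
  · refine ⟨fun t => l₀ * t, l₀⁻¹, strictMono_mul_left_of_pos h₀, mul_zero _,
      mul_inv_cancel₀ h₀.ne', fun t => ?_⟩
    simpa [h] using (hasDerivAt_id t).const_mul l₀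
  · set γ := l₁ - l₀
    have hγ : γ ≠ 0 := sub_ne_zero.mpr hγ
    -- `l₀ + γ s` solves `v' = γ v` with `v 0 = l₀`, so it equals `l₀ exp (γ t)`.
    have hs' : ∀ t, HasDerivAt (fun t => l₀ / γ * (Real.exp (γ * t) - 1))
        (l₀ * Real.exp (γ * t)) t := fun t => by
      refine ((((hasDerivAt_id' t).const_mul γ).exp.sub_const 1).const_mul
        (l₀ / γ)).congr_deriv ?_
      field_simp
    refine ⟨_, Real.log (l₁ / l₀) / γ, strictMono_of_hasDerivAt_pos hs' fun t => by positivity,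
      by simp, ?_, fun t => (hs' t).congr_deriv ?_⟩
    · rw [mul_div_cancel₀ _ hγ, Real.exp_log (by positivity)]
      field_simp
      simp [γ]
    · field_simp
      ring

theorem canReach_segment_of_monotone {n m : ℕ}
    {f : (Fin n → ℝ) → (Fin m → ℝ) → (Fin n → ℝ)} {z y : Fin n → ℝ} {s v : ℝ → ℝ} {T : ℝ}
    (hs : Monotone s) (hs0 : s 0 = 0) (hsT : s T = 1) (hs' : ∀ t, HasDerivAt s (v t) t)
    (hv : ∀ t, ∃ w, f (z + s t • (y - z)) w = v t • (y - z)) :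
    CanReach f (segment ℝ z y) {y} z := by
  choose u hu using hv
  refine ⟨u, fun t => z + s t • (y - z), T, (hs.reflect_lt (by simp [hs0, hsT])).le,
    fun t _ => ?_, by simp [hs0], fun t ht => ?_, by simp [hsT]⟩
  · rw [hu]
    exact ((hs' t).smul_const (y - z)).const_add z
  · rw [segment_eq_image']
    exact ⟨s t, hs0 ▸ hsT ▸ hs.mapsTo_Icc ht, rfl⟩

theorem reach_along_segment_general {n m : ℕ}
    (A : Matrix (Fin n) (Fin n) ℝ) (a : Fin n → ℝ) (B : Matrix (Fin n) (Fin m) ℝ)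
    (hBrank : B.rank = n - 1)
    (P : Set (Fin n → ℝ))
    (O : Set (Fin n → ℝ)) (hO : O = {x | A.mulVec x + a ∈ Set.range B.mulVec})
    (β : Fin n → ℝ) (hβ1 : β ⬝ᵥ β = 1)
    (hβB : ∀ w : Fin m → ℝ, β ⬝ᵥ B.mulVec w = 0)
    (hβsign : ∀ x ∈ P, β ⬝ᵥ (A.mulVec x + a) ≤ 0)
    (z y : Fin n → ℝ) (hzP : z ∈ P) (hyP : y ∈ P)
    (hzO : z ∉ O) (hyO : y ∉ O)
    (hlt : β ⬝ᵥ y < β ⬝ᵥ z) :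
    CanReach (fun x u => A.mulVec x + a + B.mulVec u) (segment ℝ z y) {y} z := by
  have hβ : β ≠ 0 := by
    rintro rfl
    simp at hβ1
  have hrange := range_mulVec_eq_setOf_dotProduct_eq_zero (by simpa using hBrank) hβ hβB
  set g : (Fin n → ℝ) → ℝ := fun x => β ⬝ᵥ (A *ᵥ x + a)
  have hg : ∀ x ∈ P, x ∉ O → g x < 0 := fun x hxP hxO =>
    (hβsign x hxP).lt_of_ne fun h => hxO (by rw [hO, mem_ofPred, hrange]; exact h)
  have hg_segment : ∀ r : ℝ, g (z + r • (y - z)) = g z + r * (g y - g z) := fun r => by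
    simp only [g, mulVec_add, mulVec_smul, mulVec_sub, dotProduct_add, dotProduct_smul,
      dotProduct_sub, smul_eq_mul]
    ring
  set d := β ⬝ᵥ (y - z)
  have hd : d < 0 := by
    simp only [d, dotProduct_sub]
    linarith
  obtain ⟨s, T, hs, hs0, hsT, hs'⟩ := exists_strictMono_hasDerivAt_affine
    (div_pos_of_neg_of_neg (hg z hzP hzO) hd) (div_pos_of_neg_of_neg (hg y hyP hyO) hd)
  refine canReach_segment_of_monotone hs.monotone hs0 hsT hs' fun t => ?_
  obtain ⟨w, hw⟩ : (g z / d + (g y / d - g z / d) * s t) • (y - z) -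
      (A *ᵥ (z + s t • (y - z)) + a) ∈ range B.mulVec := by
    rw [hrange, mem_ofPred, dotProduct_sub, dotProduct_smul, smul_eq_mul]
    change _ * d - g (z + s t • (y - z)) = 0
    rw [hg_segment]
    field_simp [hd.ne]
    ring
  exact ⟨w, by rw [hw]; abel⟩

/-- If `z ≠ y` are points of `𝒫` with `z, y ∉ 𝒪` and `βᵀy < βᵀz`, then `z` can reach `y`
along the line segment joining them in finite time. -/
theorem reach_along_segment {n m : ℕ}
    (A : Matrix (Fin n) (Fin n) ℝ) (a : Fin n → ℝ) (B : Matrix (Fin n) (Fin m) ℝ)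
    (hBrank : B.rank = n - 1)
    (V : Finset (Fin n → ℝ)) (P : Set (Fin n → ℝ))
    (hP : P = convexHull ℝ (V : Set (Fin n → ℝ)))
    (hPfull : (interior P).Nonempty)
    (O : Set (Fin n → ℝ)) (hO : O = {x | A.mulVec x + a ∈ Set.range B.mulVec})
    (hdisj : interior P ∩ O = ∅)
    (β : Fin n → ℝ) (hβ1 : β ⬝ᵥ β = 1)
    (hβB : ∀ w : Fin m → ℝ, β ⬝ᵥ B.mulVec w = 0)
    (hβsign : ∀ x ∈ P, β ⬝ᵥ (A.mulVec x + a) ≤ 0)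
    (z y : Fin n → ℝ) (hzP : z ∈ P) (hyP : y ∈ P) (hne : y ≠ z)
    (hzO : z ∉ O) (hyO : y ∉ O)
    (hlt : β ⬝ᵥ y < β ⬝ᵥ z) :
    CanReach (fun x u => A.mulVec x + a + B.mulVec u) (segment ℝ z y) {y} z :=
  reach_along_segment_general A a B hBrank P O hO β hβ1 hβB hβsign z y hzP hyP hzO hyO hlt
end

section
/- Suppose there is a vertex v* of ℱ with v* ∈ ℱ ∩ 𝒫⁺. Let P̃ ⊆ 𝒫 be any n-dimensional polytope having ℱ as a facet. Then 𝒫 →_𝒫 ℱ implies P̃ →_{P̃} ℱ. -/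
open Matrix Set

/-- Controllability of the pair `(A,B)`. -/
def Controllable {n m : ℕ} (A : Matrix (Fin n) (Fin n) ℝ)
    (B : Matrix (Fin n) (Fin m) ℝ) : Prop :=
  (⨆ i : Fin n, LinearMap.range ((Matrix.toLin' A ^ (i : ℕ)).comp (Matrix.toLin' B))) = ⊤

/-!
Because `β` spans the orthogonal complement of the hyperplane `Im B`, a differentiable path `y`
is a trajectory for some open-loop control exactly when `β ⬝ᵥ ẏ = β ⬝ᵥ (A y + a)`; in
particular `β ⬝ᵥ x` is nonincreasing along trajectories in `𝒫`. Start at `x₀ ∈ P̃` and let `z ∈ ℱ`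
be the endpoint of a trajectory in `𝒫`, so `β ⬝ᵥ z ≤ β ⬝ᵥ x₀`. If equality holds, the drift
`β ⬝ᵥ (A x + a)` vanishes at `x₀` and at `z`, hence on the segment `[x₀, z]`, which is therefore
realizable. Otherwise look for a path `x₀ + r t • (z - x₀) + t • (v* - x₀)` in the triangle
`x₀ z v* ⊆ P̃`: realizability is a linear ODE for `r` whose forcing term is nonnegative, since
the drift is nonpositive on `𝒫` and `β ⬝ᵥ v* ≥ β ⬝ᵥ x₀`. So `r ≥ 0`, and the path stays in the
triangle until `r t + t = 1`, when it lies on the edge `[z, v*] ⊆ ℱ`.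
-/

theorem exists_hasDerivAt_linear_ode_nonneg (α : ℝ) {h : ℝ → ℝ} (hh : Continuous h) :
    ∃ y : ℝ → ℝ, y 0 = 0 ∧ (∀ t, HasDerivAt y (α * y t + h t) t) ∧
      ∀ t, 0 ≤ t → (∀ r ∈ Icc 0 t, 0 ≤ h r) → 0 ≤ y t := by
  have hk : Continuous fun r => Real.exp (-α * r) * h r := by fun_prop
  refine ⟨fun t => Real.exp (α * t) * ∫ r in (0:ℝ)..t, Real.exp (-α * r) * h r, by simp,
    fun t => ?_, fun t ht hpos => ?_⟩
  · have hI := intervalIntegral.integral_hasDerivAt_right (hk.intervalIntegrable 0 t)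
      (hk.stronglyMeasurableAtFilter _ _) hk.continuousAt
    have hexp : Real.exp (α * t) * Real.exp (-α * t) = 1 := by
      rw [← Real.exp_add, neg_mul, add_neg_cancel, Real.exp_zero]
    have hE : HasDerivAt (fun t => Real.exp (α * t)) (Real.exp (α * t) * α) t := by
      simpa using ((hasDerivAt_id t).const_mul α).exp
    exact (hE.mul hI).congr_deriv (by linear_combination h t * hexp)
  · exact mul_nonneg (Real.exp_nonneg _) (intervalIntegral.integral_nonneg ht
      fun r hr => mul_nonneg (Real.exp_nonneg _) (hpos r hr))

theorem exists_first_eq_of_le_of_le {f : ℝ → ℝ} {a b c : ℝ} (hab : a ≤ b)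
    (hf : ContinuousOn f (Icc a b)) (ha : f a ≤ c) (hb : c ≤ f b) :
    ∃ τ ∈ Icc a b, f τ = c ∧ ∀ t ∈ Icc a τ, f t ≤ c := by
  set S := Icc a b ∩ f ⁻¹' {c}
  have hS : IsCompact S := isCompact_Icc.of_isClosed_subset
    (hf.preimage_isClosed_of_isClosed isClosed_Icc isClosed_singleton) inter_subset_left
  obtain ⟨τ, ⟨hτ, hfτ⟩, hleast⟩ := hS.exists_isLeast (intermediate_value_Icc hab hf ⟨ha, hb⟩)
  refine ⟨τ, hτ, hfτ, fun t ht => le_of_not_gt fun hct => ?_⟩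
  obtain ⟨s, hs, hfs⟩ := intermediate_value_Icc ht.1 (hf.mono (Icc_subset_Icc_right
    (ht.2.trans hτ.2))) ⟨ha, hct.le⟩
  have hτs : τ ≤ s := hleast ⟨⟨hs.1, hs.2.trans (ht.2.trans hτ.2)⟩, hfs⟩
  have hts : t = τ := le_antisymm ht.2 (hτs.trans hs.2)
  exact hct.ne' (hts ▸ hfτ)

theorem exists_linear_ode_sol_nonneg_until_add_eq_one (α : ℝ) {h : ℝ → ℝ} (hh : Continuous h)
    (hpos : ∀ t ∈ Icc (0:ℝ) 1, 0 ≤ h t) :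
    ∃ r : ℝ → ℝ, ∃ τ ∈ Icc (0:ℝ) 1, r 0 = 0 ∧ (∀ t, HasDerivAt r (α * r t + h t) t) ∧
      (∀ t ∈ Icc 0 τ, 0 ≤ r t ∧ r t + t ≤ 1) ∧ r τ + τ = 1 := by
  obtain ⟨r, hr0, hr', hrpos⟩ := exists_hasDerivAt_linear_ode_nonneg α hh
  have hcont : Continuous fun t => r t + t :=
    (continuous_iff_continuousAt.2 fun t => (hr' t).continuousAt).add continuous_id
  obtain ⟨τ, hτ, hτ1, hle⟩ := exists_first_eq_of_le_of_le (c := 1) zero_le_one hcont.continuousOn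
    (by simp [hr0]) (by simpa using hrpos 1 zero_le_one hpos)
  exact ⟨r, τ, hτ, hr0, hr', fun t ht =>
    ⟨hrpos t ht.1 fun s hs => hpos s ⟨hs.1, hs.2.trans (ht.2.trans hτ.2)⟩, hle t ht⟩, hτ1⟩

theorem Convex.add_smul_sub_add_smul_sub_mem {𝕜 E : Type*} [Field 𝕜] [LinearOrder 𝕜]
    [IsStrictOrderedRing 𝕜] [AddCommGroup E] [Module 𝕜 E] {s : Set E} (hs : Convex 𝕜 s)
    {x y z : E} (hx : x ∈ s) (hy : y ∈ s) (hz : z ∈ s) {r t : 𝕜} (hr : 0 ≤ r) (ht : 0 ≤ t)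
    (hrt : r + t ≤ 1) : x + r • (y - x) + t • (z - x) ∈ s := by
  have hmem := hs.sum_mem (t := Finset.univ) (w := ![1 - r - t, r, t]) (z := ![x, y, z])
    (fun i _ => by fin_cases i <;> simp [hr, ht, sub_sub, sub_nonneg.2 hrt])
    (by simp [Fin.sum_univ_three]; ring) (fun i _ => by fin_cases i <;> simp [hx, hy, hz])
  convert hmem using 1
  simp only [Fin.sum_univ_three, Matrix.cons_val]
  module

theorem HasDerivAt.const_dotProduct {ι : Type*} [Fintype ι] (β : ι → ℝ) {x : ℝ → ι → ℝ}
    {x' : ι → ℝ} {t : ℝ} (h : HasDerivAt x x' t) :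
    HasDerivAt (fun s => β ⬝ᵥ x s) (β ⬝ᵥ x') t :=
  (LinearMap.toContinuousLinearMap (dotProductBilin ℝ ℝ β)).hasFDerivAt.comp_hasDerivAt t h

theorem HasDerivAt.eq_zero_of_antitoneOn_of_eq {f : ℝ → ℝ} {f' a b t : ℝ} (hab : a < b)
    (hf : AntitoneOn f (Icc a b)) (hfab : f a = f b) (ht : t ∈ Icc a b)
    (hd : HasDerivAt f f' t) : f' = 0 := by
  have hconst : EqOn f (fun _ => f a) (Icc a b) := fun r hr =>
    le_antisymm (hf (left_mem_Icc.2 hab.le) hr hr.1)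
      (hfab ▸ hf hr (right_mem_Icc.2 hab.le) hr.2)
  exact (uniqueDiffOn_Icc hab t ht).eq_deriv _ hd.hasDerivWithinAt
    ((hasDerivWithinAt_const t _ (f a)).congr hconst (hconst ht))

theorem Matrix.range_mulVecLin_eq_ker_dotProductBilin {n m : ℕ} {B : Matrix (Fin n) (Fin m) ℝ}
    {β : Fin n → ℝ} (hBrank : B.rank = n - 1) (hβ : β ≠ 0) (hβB : ∀ w, β ⬝ᵥ B *ᵥ w = 0) :
    LinearMap.range B.mulVecLin = LinearMap.ker (dotProductBilin ℝ ℝ β) := by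
  have hle : LinearMap.range B.mulVecLin ≤ LinearMap.ker (dotProductBilin ℝ ℝ β) := by
    rintro _ ⟨w, rfl⟩
    exact hβB w
  have hker := Module.Dual.finrank_ker_add_one_of_ne_zero (f := dotProductBilin ℝ ℝ β)
    fun h0 => hβ (dotProduct_self_eq_zero.1 (LinearMap.congr_fun h0 β))
  rw [Module.finrank_fin_fun] at hker
  refine Submodule.eq_of_le_of_finrank_le hle ?_
  change _ ≤ B.rank
  omega

theorem CanReach.mono_target {n m : ℕ} {f : (Fin n → ℝ) → (Fin m → ℝ) → (Fin n → ℝ)}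
    {Ω Ωf Ωf' : Set (Fin n → ℝ)} {x₀ : Fin n → ℝ} (h : CanReach f Ω Ωf x₀) (hf : Ωf ⊆ Ωf') :
    CanReach f Ω Ωf' x₀ :=
  let ⟨u, x, T, hT, hx, hx0, hxΩ, hxT⟩ := h
  ⟨u, x, T, hT, hx, hx0, hxΩ, hf hxT⟩

abbrev affineSystem {n m : ℕ} (A : Matrix (Fin n) (Fin n) ℝ) (a : Fin n → ℝ)
    (B : Matrix (Fin n) (Fin m) ℝ) : (Fin n → ℝ) → (Fin m → ℝ) → (Fin n → ℝ) :=
  fun x u => A *ᵥ x + a + B *ᵥ u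

section AffineSystem

variable {n m : ℕ} {A : Matrix (Fin n) (Fin n) ℝ} {a : Fin n → ℝ}
  {B : Matrix (Fin n) (Fin m) ℝ} {β : Fin n → ℝ}

theorem canReach_of_hasDerivAt
    (hB : LinearMap.ker (dotProductBilin ℝ ℝ β) ≤ LinearMap.range B.mulVecLin)
    {Ω Ωf : Set (Fin n → ℝ)} {x₀ : Fin n → ℝ} {y d : ℝ → Fin n → ℝ} {T : ℝ} (hT : 0 ≤ T)
    (hy : ∀ t ∈ Icc 0 T, HasDerivAt y (d t) t)
    (hd : ∀ t ∈ Icc 0 T, β ⬝ᵥ d t = β ⬝ᵥ (A *ᵥ y t + a))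
    (hyΩ : ∀ t ∈ Icc 0 T, y t ∈ Ω) (hy0 : y 0 = x₀) (hyT : y T ∈ Ωf) :
    CanReach (affineSystem A a B) Ω Ωf x₀ := by
  have hu : ∀ t ∈ Icc 0 T, ∃ w, B *ᵥ w = d t - (A *ᵥ y t + a) := fun t ht =>
    hB (show β ⬝ᵥ (d t - (A *ᵥ y t + a)) = 0 by rw [dotProduct_sub, hd t ht, sub_self])
  choose! u hu using hu
  refine ⟨u, y, T, hT, fun t ht => ?_, hy0, hyΩ, hyT⟩
  show HasDerivAt y (A *ᵥ y t + a + B *ᵥ u t) t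
  rw [hu t ht, add_sub_cancel]
  exact hy t ht

theorem IsTrajOn.dotProduct_lt_or_drift_eq_zero (hβB : ∀ w, β ⬝ᵥ B *ᵥ w = 0)
    {u : ℝ → Fin m → ℝ} {x : ℝ → Fin n → ℝ} {T : ℝ} (hx : IsTrajOn (affineSystem A a B) u x T)
    (hT : 0 < T) (hsign : ∀ t ∈ Icc 0 T, β ⬝ᵥ (A *ᵥ x t + a) ≤ 0) :
    β ⬝ᵥ x T < β ⬝ᵥ x 0 ∨ β ⬝ᵥ x T = β ⬝ᵥ x 0 ∧
      β ⬝ᵥ (A *ᵥ x 0 + a) = 0 ∧ β ⬝ᵥ (A *ᵥ x T + a) = 0 := by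
  have hderiv : ∀ t ∈ Icc 0 T, HasDerivAt (fun s => β ⬝ᵥ x s) (β ⬝ᵥ (A *ᵥ x t + a)) t := by
    intro t ht
    simpa [dotProduct_add, hβB] using (hx t ht).const_dotProduct β
  have hanti : AntitoneOn (fun s => β ⬝ᵥ x s) (Icc 0 T) :=
    antitoneOn_of_hasDerivWithinAt_nonpos (convex_Icc 0 T)
      (fun t ht => (hderiv t ht).continuousAt.continuousWithinAt)
      (fun t ht => (hderiv t (interior_subset ht)).hasDerivWithinAt)
      (fun t ht => hsign t (interior_subset ht))
  have h0 := left_mem_Icc.2 hT.le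
  have hT' := right_mem_Icc.2 hT.le
  refine (hanti h0 hT' hT.le).lt_or_eq |>.imp id fun heq => ⟨heq, ?_, ?_⟩
  · exact (hderiv 0 h0).eq_zero_of_antitoneOn_of_eq hT hanti heq.symm h0
  · exact (hderiv T hT').eq_zero_of_antitoneOn_of_eq hT hanti heq.symm hT'

theorem canReach_of_dotProduct_eq
    (hB : LinearMap.ker (dotProductBilin ℝ ℝ β) ≤ LinearMap.range B.mulVecLin)
    {Ω : Set (Fin n → ℝ)} (hΩ : Convex ℝ Ω) {x z : Fin n → ℝ} (hx : x ∈ Ω) (hz : z ∈ Ω)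
    (hzx : β ⬝ᵥ z = β ⬝ᵥ x) (hgx : β ⬝ᵥ (A *ᵥ x + a) = 0) (hgz : β ⬝ᵥ (A *ᵥ z + a) = 0) :
    CanReach (affineSystem A a B) Ω {z} x := by
  refine canReach_of_hasDerivAt hB zero_le_one (y := fun t => x + t • (z - x))
    (fun t _ => by simpa using ((hasDerivAt_id t).smul_const (z - x)).const_add x)
    (fun t _ => ?_) (fun t ht => hΩ.add_smul_sub_mem hx hz ht) (by simp) (by simp)
  have hdrift : A *ᵥ (x + t • (z - x)) + a = (1 - t) • (A *ᵥ x + a) + t • (A *ᵥ z + a) := by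
    simp only [mulVec_add, mulVec_smul, mulVec_sub]
    module
  rw [hdrift, dotProduct_add, dotProduct_smul, dotProduct_smul, hgx, hgz, dotProduct_sub, hzx]
  simp

theorem canReach_segment_of_dotProduct_lt
    (hB : LinearMap.ker (dotProductBilin ℝ ℝ β) ≤ LinearMap.range B.mulVecLin)
    {Ω : Set (Fin n → ℝ)} (hΩ : Convex ℝ Ω) (hsign : ∀ y ∈ Ω, β ⬝ᵥ (A *ᵥ y + a) ≤ 0)
    {x z v : Fin n → ℝ} (hx : x ∈ Ω) (hz : z ∈ Ω) (hv : v ∈ Ω)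
    (hzx : β ⬝ᵥ z < β ⬝ᵥ x) (hxv : β ⬝ᵥ x ≤ β ⬝ᵥ v) :
    CanReach (affineSystem A a B) Ω (segment ℝ z v) x := by
  set g : (Fin n → ℝ) → ℝ := fun y => β ⬝ᵥ (A *ᵥ y + a)
  set c := β ⬝ᵥ (z - x)
  set e := β ⬝ᵥ (v - x)
  have hc : c < 0 := by simp only [c, dotProduct_sub]; linarith
  have he : 0 ≤ e := by simp only [e, dotProduct_sub]; linarith
  -- Realizability of `x + r t • (z - x) + t • (v - x)` reads
  -- `c * r' t + e = g x + r t * (g z - g x) + t * (g v - g x)`.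
  have hforce : ∀ t ∈ Icc (0:ℝ) 1, 0 ≤ ((1 - t) * g x + t * g v - e) / c := fun t ht =>
    div_nonneg_of_nonpos (by nlinarith [hsign x hx, hsign v hv, ht.1, ht.2]) hc.le
  obtain ⟨r, τ, hτ, hr0, hr', hrτ, hτ1⟩ :=
    exists_linear_ode_sol_nonneg_until_add_eq_one ((g z - g x) / c) (by fun_prop) hforce
  refine canReach_of_hasDerivAt hB hτ.1 (y := fun t => x + r t • (z - x) + t • (v - x))
    (fun t _ => (((hr' t).smul_const _).const_add x).add ((hasDerivAt_id t).smul_const _))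
    (fun t _ => ?_) (fun t ht => ?_) (by simp [hr0]) ?_
  · have hdrift : g (x + r t • (z - x) + t • (v - x))
        = g x + r t * (g z - g x) + t * (g v - g x) := by
      simp only [g, mulVec_add, mulVec_smul, mulVec_sub, dotProduct_add, dotProduct_smul,
        dotProduct_sub, smul_eq_mul]
      ring
    change β ⬝ᵥ (_ • (z - x) + (1:ℝ) • (v - x)) = g _
    rw [hdrift, dotProduct_add, dotProduct_smul, dotProduct_smul, smul_eq_mul, smul_eq_mul,
      one_mul]
    change _ * c + e = _
    field_simp [hc.ne]
    ring
  · exact hΩ.add_smul_sub_add_smul_sub_mem hx hz hv (hrτ t ht).1 ht.1 (hrτ t ht).2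
  · refine ⟨1 - τ, τ, by linarith [hτ.2], hτ.1, by ring, ?_⟩
    simp only [show r τ = 1 - τ by linarith]
    module

end AffineSystem

theorem subpolytope_reach_general {n m : ℕ}
    (A : Matrix (Fin n) (Fin n) ℝ) (a : Fin n → ℝ) (B : Matrix (Fin n) (Fin m) ℝ)
    (hBrank : B.rank = n - 1)
    (P : Set (Fin n → ℝ))
    (W : Finset (Fin n → ℝ)) (F : Set (Fin n → ℝ))
    (hF : F = convexHull ℝ (W : Set (Fin n → ℝ)))
    (β : Fin n → ℝ) (hβ1 : β ⬝ᵥ β = 1)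
    (hβB : ∀ w : Fin m → ℝ, β ⬝ᵥ B.mulVec w = 0)
    (hβsign : ∀ x ∈ P, β ⬝ᵥ (A.mulVec x + a) ≤ 0)
    (vstar : Fin n → ℝ)
    (hvstarF : vstar ∈ F) (hvstarPplus : ∀ y ∈ P, β ⬝ᵥ y ≤ β ⬝ᵥ vstar)
    (Vt : Finset (Fin n → ℝ)) (Pt : Set (Fin n → ℝ))
    (hPt : Pt = convexHull ℝ (Vt : Set (Fin n → ℝ)))
    (hPtsub : Pt ⊆ P)
    (hFfacet : IsExtreme ℝ Pt F)
    (hreach : ∀ x ∈ P, CanReach (fun x u => A.mulVec x + a + B.mulVec u) P F x) :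
    ∀ x ∈ Pt, CanReach (fun x u => A.mulVec x + a + B.mulVec u) Pt F x := by
  intro x₀ hx₀
  have hB := (Matrix.range_mulVecLin_eq_ker_dotProductBilin hBrank
    (fun h0 => by simp [h0] at hβ1) hβB).ge
  have hPtconv : Convex ℝ Pt := hPt ▸ convex_convexHull ℝ _
  have hFconv : Convex ℝ F := hF ▸ convex_convexHull ℝ _
  obtain ⟨u, x, T, hT, htraj, rfl, hxP, hxT⟩ := hreach x₀ (hPtsub hx₀)
  rcases hT.eq_or_lt with rfl | hT
  · exact ⟨u, x, 0, le_rfl, htraj, rfl, fun t ht => le_antisymm ht.2 ht.1 ▸ hx₀, hxT⟩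
  rcases htraj.dotProduct_lt_or_drift_eq_zero hβB hT (fun t ht => hβsign _ (hxP t ht)) with
    hlt | ⟨heq, hg0, hgT⟩
  · exact (canReach_segment_of_dotProduct_lt hB hPtconv (fun y hy => hβsign y (hPtsub hy))
      hx₀ (hFfacet.1 hxT) (hFfacet.1 hvstarF) hlt (hvstarPplus _ (hPtsub hx₀))).mono_target
      (hFconv.segment_subset hxT hvstarF)
  · exact (canReach_of_dotProduct_eq hB hPtconv hx₀ (hFfacet.1 hxT) heq hg0 hgT).mono_target
      (singleton_subset_iff.2 hxT)

/-- If some vertex `v*` of `ℱ` lies in `ℱ ∩ 𝒫⁺`, and `P̃ ⊆ 𝒫` is an `n`-dimensional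
polytope with `ℱ` as a facet, then `𝒫 →_𝒫 ℱ` implies `P̃ →_{P̃} ℱ`. -/
theorem subpolytope_reach {n m : ℕ}
    (A : Matrix (Fin n) (Fin n) ℝ) (a : Fin n → ℝ) (B : Matrix (Fin n) (Fin m) ℝ)
    (hBrank : B.rank = n - 1) (hctrb : Controllable A B)
    (V : Finset (Fin n → ℝ)) (P : Set (Fin n → ℝ))
    (hP : P = convexHull ℝ (V : Set (Fin n → ℝ)))
    (hPfull : (interior P).Nonempty)
    (O : Set (Fin n → ℝ)) (hO : O = {x | A.mulVec x + a ∈ Set.range B.mulVec})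
    (hdisj : interior P ∩ O = ∅)
    (W : Finset (Fin n → ℝ)) (F : Set (Fin n → ℝ))
    (hF : F = convexHull ℝ (W : Set (Fin n → ℝ)))
    (hFsub : F ⊆ frontier P)
    (hFdim : Module.finrank ℝ (vectorSpan ℝ F) = n - 1)
    (β : Fin n → ℝ) (hβ1 : β ⬝ᵥ β = 1)
    (hβB : ∀ w : Fin m → ℝ, β ⬝ᵥ B.mulVec w = 0)
    (hβsign : ∀ x ∈ P, β ⬝ᵥ (A.mulVec x + a) ≤ 0)
    (vstar : Fin n → ℝ) (hvstar : vstar ∈ Set.extremePoints ℝ F)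
    (hvstarF : vstar ∈ F) (hvstarPplus : ∀ y ∈ P, β ⬝ᵥ y ≤ β ⬝ᵥ vstar)
    (Vt : Finset (Fin n → ℝ)) (Pt : Set (Fin n → ℝ))
    (hPt : Pt = convexHull ℝ (Vt : Set (Fin n → ℝ)))
    (hPtsub : Pt ⊆ P) (hPtfull : (interior Pt).Nonempty)
    (hFfacet : IsExtreme ℝ Pt F)
    (hreach : ∀ x ∈ P, CanReach (fun x u => A.mulVec x + a + B.mulVec u) P F x) :
    ∀ x ∈ Pt, CanReach (fun x u => A.mulVec x + a + B.mulVec u) Pt F x :=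
  subpolytope_reach_general A a B hBrank P W F hF β hβ1 hβB hβsign vstar hvstarF hvstarPplus Vt Pt
    hPt hPtsub hFfacet hreach
end

section
/- Scalar comparison bound for the β-component of trajectories: let g(y) = max{βᵀ(Ax+a) : x ∈ 𝒫, βᵀx = y} on its domain, which is locally Lipschitz, and let φ_t(y₀) solve ẏ = g(y). Then for any trajectory x(t) of ẋ = Ax + a + Bu(t) remaining in 𝒫 on [0, T̄], the function ξ(t) = βᵀx(t) satisfies ξ(t) ≤ φ_t(ξ(0)) for all t ∈ [0, T̄]. Consequently, if g(y*) ≤ 0 at the level y* of a slice ℬ_z ∩ 𝒫 and ξ(0) ≤ y*, then ξ(t) ≤ y* for all t ∈ [0, T̄]. -/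
open Matrix Set

/-- Dot product with a fixed vector, as a linear map. -/
noncomputable def dotLin {n : ℕ} (β : Fin n → ℝ) : (Fin n → ℝ) →ₗ[ℝ] ℝ where
  toFun z := β ⬝ᵥ z
  map_add' u v := dotProduct_add β u v
  map_smul' r v := by simp [dotProduct_smul, smul_eq_mul]

/-- If `g` vanishes below `ymin` and `φ` solves `φ' = g ∘ φ` starting at or above `ymin`,
then `φ` stays above `ymin`. -/
lemma fence_min (g φ : ℝ → ℝ) (T ymin : ℝ)
    (hφ : ∀ t ∈ Set.Icc (0:ℝ) T, HasDerivAt φ (g (φ t)) t)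
    (hφc : ContinuousOn φ (Icc (0:ℝ) T))
    (hφ0 : ymin ≤ φ 0)
    (hg0 : ∀ y < ymin, g y = 0) :
    ∀ t ∈ Icc (0:ℝ) T, ymin ≤ φ t := by
  intro t ht
  have hb : ∀ ε : ℝ, 0 < ε → ymin - φ t ≤ ε * Real.exp t := by
    intro ε hε
    refine image_le_of_deriv_right_lt_deriv_boundary' (f := fun s => ymin - φ s)
      (f' := fun s => -(g (φ s))) (a := 0) (b := T)
      (B := fun s => ε * Real.exp s) (B' := fun s => ε * Real.exp s)
      (continuousOn_const.sub hφc) ?_ ?_ ?_ ?_ ?_ ht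
    · intro s hs
      exact ((hφ s (Ico_subset_Icc_self hs)).const_sub ymin).hasDerivWithinAt
    · simp only [Real.exp_zero, mul_one]
      linarith
    · exact (continuous_const.mul Real.continuous_exp).continuousOn
    · intro s hs
      exact ((Real.hasDerivAt_exp s).const_mul ε).hasDerivWithinAt
    · intro s hs heq
      have hpos : 0 < ε * Real.exp s := by positivity
      have hlt : φ s < ymin := by
        have : ymin - φ s = ε * Real.exp s := heq
        linarith
      show -(g (φ s)) < ε * Real.exp s
      rw [hg0 (φ s) hlt]
      simpa using hpos
  have h2 : ymin - φ t ≤ 0 := by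
    refine le_of_forall_pos_le_add fun ε' hε' => ?_
    have h1 := hb (ε' / Real.exp T) (by positivity)
    have h3 : (ε' / Real.exp T) * Real.exp t ≤ ε' := by
      rw [div_mul_eq_mul_div, div_le_iff₀ (Real.exp_pos T)]
      exact mul_le_mul_of_nonneg_left (Real.exp_le_exp.2 ht.2) hε'.le
    linarith
  linarith

/-- One-sided comparison: a subsolution starting below a (one-sided Lipschitz bounded)
supersolution stays below it. -/
lemma fence_main (g ξ ψ ξ' ψ' : ℝ → ℝ) (T K ymin ymax : ℝ) (hK0 : 0 ≤ K)
    (hξc : ContinuousOn ξ (Icc (0:ℝ) T))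
    (hξd : ∀ s ∈ Ico (0:ℝ) T, HasDerivWithinAt ξ (ξ' s) (Ici s) s)
    (hξle : ∀ s ∈ Ico (0:ℝ) T, ξ' s ≤ g (ξ s))
    (hξmax : ∀ s ∈ Ico (0:ℝ) T, ξ s ≤ ymax)
    (hLip : ∀ y' y : ℝ, ymin ≤ y' → y' ≤ y → y ≤ ymax → g y ≤ g y' + K * (y - y'))
    (hψc : ContinuousOn ψ (Icc (0:ℝ) T))
    (hψd : ∀ s ∈ Ico (0:ℝ) T, HasDerivWithinAt ψ (ψ' s) (Ici s) s)
    (hψ0 : ξ 0 ≤ ψ 0)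
    (hψmin : ∀ s ∈ Ico (0:ℝ) T, ymin ≤ ψ s)
    (hψg : ∀ s ∈ Ico (0:ℝ) T, g (ψ s) ≤ ψ' s) :
    ∀ t ∈ Icc (0:ℝ) T, ξ t ≤ ψ t := by
  intro t ht
  have hb : ∀ ε : ℝ, 0 < ε → ξ t ≤ ψ t + ε * Real.exp ((K + 1) * t) := by
    intro ε hε
    refine image_le_of_deriv_right_lt_deriv_boundary' (f := ξ) (f' := ξ') (a := 0) (b := T)
      (B := fun s => ψ s + ε * Real.exp ((K + 1) * s))
      (B' := fun s => ψ' s + ε * (Real.exp ((K + 1) * s) * (K + 1)))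
      hξc hξd ?_ ?_ ?_ ?_ ht
    · simp only [mul_zero, Real.exp_zero, mul_one]
      linarith
    · exact hψc.add (continuous_const.mul (Real.continuous_exp.comp
        (continuous_const.mul continuous_id))).continuousOn
    · intro s hs
      refine (hψd s hs).add ?_
      have hlin : HasDerivAt (fun s : ℝ => (K + 1) * s) (K + 1) s := by
        simpa using (hasDerivAt_id s).const_mul (K + 1)
      have hde : HasDerivAt (fun s => Real.exp ((K + 1) * s))
          (Real.exp ((K + 1) * s) * (K + 1)) s := hlin.exp
      exact (hde.const_mul ε).hasDerivWithinAt
    · intro s hs heq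
      have hpos : 0 < ε * Real.exp ((K + 1) * s) := by positivity
      have heq' : ξ s = ψ s + ε * Real.exp ((K + 1) * s) := heq
      have hlt : ψ s < ξ s := by linarith
      have h1 : ξ' s ≤ g (ξ s) := hξle s hs
      have h2 : g (ξ s) ≤ g (ψ s) + K * (ξ s - ψ s) :=
        hLip (ψ s) (ξ s) (hψmin s hs) hlt.le (hξmax s hs)
      have h3 : g (ψ s) ≤ ψ' s := hψg s hs
      have h4 : ξ s - ψ s = ε * Real.exp ((K + 1) * s) := by linarith
      rw [h4] at h2
      show ξ' s < ψ' s + ε * (Real.exp ((K + 1) * s) * (K + 1))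
      nlinarith [hK0, hpos]
  refine le_of_forall_pos_le_add fun ε' hε' => ?_
  have h1 := hb (ε' / Real.exp ((K + 1) * T)) (by positivity)
  have h3 : (ε' / Real.exp ((K + 1) * T)) * Real.exp ((K + 1) * t) ≤ ε' := by
    rw [div_mul_eq_mul_div, div_le_iff₀ (Real.exp_pos _)]
    refine mul_le_mul_of_nonneg_left (Real.exp_le_exp.2 ?_) hε'.le
    nlinarith [hK0, ht.2]
  linarith

/-- Comparison bound for the `β`-component of trajectories: if `g` is the marginal
function `g(y) = max{βᵀ(Ax+a) : x ∈ 𝒫, βᵀx = y}` and `φ` solves `ẏ = g(y)` with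
`φ(0) = βᵀx(0)`, then `βᵀx(t) ≤ φ(t)` along any trajectory remaining in `𝒫`;
consequently if `g(y*) ≤ 0` for an attained level `y*` and `βᵀx(0) ≤ y*`, then
`βᵀx(t) ≤ y*` for all `t ∈ [0,T̄]`. -/
theorem beta_component_comparison {n m : ℕ}
    (A : Matrix (Fin n) (Fin n) ℝ) (a : Fin n → ℝ) (B : Matrix (Fin n) (Fin m) ℝ)
    (hBrank : B.rank = n - 1)
    (V : Finset (Fin n → ℝ)) (P : Set (Fin n → ℝ))
    (hP : P = convexHull ℝ (V : Set (Fin n → ℝ)))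
    (hPfull : (interior P).Nonempty)
    (β : Fin n → ℝ) (hβ1 : β ⬝ᵥ β = 1)
    (hβB : ∀ w : Fin m → ℝ, β ⬝ᵥ B.mulVec w = 0)
    (g : ℝ → ℝ)
    (hg : ∀ y, g y = sSup ((fun x => β ⬝ᵥ (A.mulVec x + a)) '' {x ∈ P | β ⬝ᵥ x = y}))
    (T : ℝ) (hT : 0 ≤ T)
    (u : ℝ → Fin m → ℝ) (x : ℝ → Fin n → ℝ)
    (hx : ∀ t ∈ Set.Icc (0:ℝ) T,
      HasDerivAt x (A.mulVec (x t) + a + B.mulVec (u t)) t)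
    (hxP : ∀ t ∈ Set.Icc (0:ℝ) T, x t ∈ P)
    (φ : ℝ → ℝ) (hφ0 : φ 0 = β ⬝ᵥ x 0)
    (hφ : ∀ t ∈ Set.Icc (0:ℝ) T, HasDerivAt φ (g (φ t)) t) :
    (∀ t ∈ Set.Icc (0:ℝ) T, β ⬝ᵥ x t ≤ φ t) ∧
    (∀ ystar : ℝ, (∃ z ∈ P, β ⬝ᵥ z = ystar) → g ystar ≤ 0 → β ⬝ᵥ x 0 ≤ ystar →
      ∀ t ∈ Set.Icc (0:ℝ) T, β ⬝ᵥ x t ≤ ystar) := by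
  have h0T : (0:ℝ) ∈ Icc (0:ℝ) T := ⟨le_refl 0, hT⟩
  -- basic convexity facts
  have hPconv : Convex ℝ P := hP ▸ convex_convexHull ℝ _
  have hVP : ∀ v ∈ V, v ∈ P := fun v hv => hP ▸ subset_convexHull ℝ _ hv
  have hVne : V.Nonempty := by
    rcases hPfull with ⟨p, hp⟩
    have hpP : p ∈ P := interior_subset hp
    rw [hP] at hpP
    by_contra h
    rw [Finset.not_nonempty_iff_eq_empty] at h
    simp [h] at hpP
  -- decomposition of points of P as convex combinations, with the two affine evaluations
  have decomp : ∀ z ∈ P, ∃ w : (Fin n → ℝ) → ℝ, (∀ v ∈ V, 0 ≤ w v) ∧ (∑ v ∈ V, w v = 1) ∧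
      β ⬝ᵥ z = ∑ v ∈ V, w v * (β ⬝ᵥ v) ∧
      β ⬝ᵥ (A.mulVec z + a) = ∑ v ∈ V, w v * (β ⬝ᵥ (A.mulVec v + a)) := by
    intro z hz
    rw [hP, Finset.convexHull_eq] at hz
    obtain ⟨w, hw0, hw1, hcm⟩ := hz
    have hze : z = ∑ v ∈ V, w v • v := by
      rw [← hcm, Finset.centerMass_eq_of_sum_1 _ _ hw1]
      simp
    refine ⟨w, hw0, hw1, ?_, ?_⟩
    · rw [hze]
      show dotLin β _ = _
      rw [map_sum]
      simp [dotLin, smul_eq_mul]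
    · rw [hze]
      have h1 : A.mulVec (∑ v ∈ V, w v • v) = ∑ v ∈ V, w v • A.mulVec v := by
        show A.mulVecLin _ = _
        rw [map_sum]; simp
      rw [h1, dotProduct_add]
      have h2 : β ⬝ᵥ (∑ v ∈ V, w v • A.mulVec v) = ∑ v ∈ V, w v * (β ⬝ᵥ A.mulVec v) := by
        show dotLin β _ = _
        rw [map_sum]; simp [dotLin, smul_eq_mul]
      rw [h2]
      have h3 : β ⬝ᵥ a = ∑ v ∈ V, w v * (β ⬝ᵥ a) := by rw [← Finset.sum_mul, hw1, one_mul]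
      rw [h3, ← Finset.sum_add_distrib]
      refine Finset.sum_congr rfl fun v hv => ?_
      rw [dotProduct_add]; ring
  set ymin : ℝ := V.inf' hVne (fun v => β ⬝ᵥ v) with hymin_def
  set ymax : ℝ := V.sup' hVne (fun v => β ⬝ᵥ v) with hymax_def
  set cmax : ℝ := V.sup' hVne (fun v => β ⬝ᵥ (A.mulVec v + a)) with hcmax_def
  have hyminP : ∀ z ∈ P, ymin ≤ β ⬝ᵥ z := by
    intro z hz
    obtain ⟨w, hw0, hw1, hb, -⟩ := decomp z hz
    rw [hb]
    calc ymin = ∑ v ∈ V, w v * ymin := by rw [← Finset.sum_mul, hw1, one_mul]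
      _ ≤ ∑ v ∈ V, w v * (β ⬝ᵥ v) := Finset.sum_le_sum fun v hv =>
          mul_le_mul_of_nonneg_left (Finset.inf'_le _ hv) (hw0 v hv)
  have hymaxP : ∀ z ∈ P, β ⬝ᵥ z ≤ ymax := by
    intro z hz
    obtain ⟨w, hw0, hw1, hb, -⟩ := decomp z hz
    rw [hb]
    calc ∑ v ∈ V, w v * (β ⬝ᵥ v) ≤ ∑ v ∈ V, w v * ymax := Finset.sum_le_sum fun v hv =>
          mul_le_mul_of_nonneg_left (Finset.le_sup' _ hv) (hw0 v hv)
      _ = ymax := by rw [← Finset.sum_mul, hw1, one_mul]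
  have hcmaxP : ∀ z ∈ P, β ⬝ᵥ (A.mulVec z + a) ≤ cmax := by
    intro z hz
    obtain ⟨w, hw0, hw1, -, hc⟩ := decomp z hz
    rw [hc]
    calc ∑ v ∈ V, w v * (β ⬝ᵥ (A.mulVec v + a)) ≤ ∑ v ∈ V, w v * cmax :=
          Finset.sum_le_sum fun v hv =>
            mul_le_mul_of_nonneg_left
              (Finset.le_sup' (fun v => β ⬝ᵥ (A.mulVec v + a)) hv) (hw0 v hv)
      _ = cmax := by rw [← Finset.sum_mul, hw1, one_mul]
  -- bddAbove of slice images
  have hbdd : ∀ y : ℝ, BddAbove ((fun x => β ⬝ᵥ (A.mulVec x + a)) '' {x ∈ P | β ⬝ᵥ x = y}) := by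
    intro y
    refine ⟨cmax, ?_⟩
    rintro _ ⟨z, ⟨hzP, -⟩, rfl⟩
    exact hcmaxP z hzP
  have hgle : ∀ z ∈ P, β ⬝ᵥ (A.mulVec z + a) ≤ g (β ⬝ᵥ z) := by
    intro z hz
    rw [hg]
    exact le_csSup (hbdd _) ⟨z, ⟨hz, rfl⟩, rfl⟩
  have hg0 : ∀ y : ℝ, y < ymin → g y = 0 := by
    intro y hy
    rw [hg]
    have hempty : {x | x ∈ P ∧ β ⬝ᵥ x = y} = ∅ := by
      ext z
      simp only [mem_setOf_eq, mem_empty_iff_false, iff_false, not_and]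
      intro hzP hzy
      exact absurd hzy (by intro h; linarith [hyminP z hzP])
    rw [show {x ∈ P | β ⬝ᵥ x = y} = (∅ : Set (Fin n → ℝ)) from hempty, Set.image_empty,
      Real.sSup_empty]
  -- nonemptiness of slices
  have hslice : ∀ y : ℝ, ymin ≤ y → y ≤ ymax → ∃ z ∈ P, β ⬝ᵥ z = y := by
    intro y h1 h2
    obtain ⟨vm, hvmV, hvm⟩ := Finset.exists_mem_eq_inf' hVne (fun v => β ⬝ᵥ v)
    obtain ⟨vM, hvMV, hvM⟩ := Finset.exists_mem_eq_sup' hVne (fun v => β ⬝ᵥ v)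
    rcases eq_or_lt_of_le (le_trans h1 h2) with heq | hlt
    · exact ⟨vm, hVP vm hvmV, by rw [← hvm]; linarith⟩
    · set θ : ℝ := (y - ymin) / (ymax - ymin) with hθdef
      have hθ0 : 0 ≤ θ := div_nonneg (by linarith) (by linarith)
      have hθ1 : θ ≤ 1 := (div_le_one (by linarith)).2 (by linarith)
      refine ⟨(1 - θ) • vm + θ • vM, hPconv (hVP vm hvmV) (hVP vM hvMV)
        (by linarith) hθ0 (by ring), ?_⟩
      rw [dotProduct_add, dotProduct_smul, dotProduct_smul]
      have hmul : θ * (ymax - ymin) = y - ymin := div_mul_cancel₀ _ (by linarith)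
      simp only [smul_eq_mul]
      rw [← hvm, ← hvM]
      nlinarith [hmul]
  -- the Lipschitz constant
  set Kset : Finset ℝ := (V ×ˢ V).image (fun p =>
    if β ⬝ᵥ p.1 = β ⬝ᵥ p.2 then (0:ℝ)
    else (β ⬝ᵥ (A.mulVec p.1 + a) - β ⬝ᵥ (A.mulVec p.2 + a)) / (β ⬝ᵥ p.1 - β ⬝ᵥ p.2))
    with hKset_def
  have hKsne : Kset.Nonempty := Finset.Nonempty.image (hVne.product hVne) _
  set K : ℝ := Kset.max' hKsne with hK_def
  have hK0 : 0 ≤ K := by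
    obtain ⟨v, hv⟩ := hVne
    refine Finset.le_max' _ _ ?_
    refine Finset.mem_image.2 ⟨(v, v), Finset.mem_product.2 ⟨hv, hv⟩, if_pos rfl⟩
  have hKs : ∀ v ∈ V, ∀ v' ∈ V, β ⬝ᵥ v' < β ⬝ᵥ v →
      β ⬝ᵥ (A.mulVec v + a) - β ⬝ᵥ (A.mulVec v' + a) ≤ K * (β ⬝ᵥ v - β ⬝ᵥ v') := by
    intro v hv v' hv' hlt
    have hne : β ⬝ᵥ v ≠ β ⬝ᵥ v' := ne_of_gt hlt
    have hmem : (β ⬝ᵥ (A.mulVec v + a) - β ⬝ᵥ (A.mulVec v' + a)) / (β ⬝ᵥ v - β ⬝ᵥ v') ∈ Kset :=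
      Finset.mem_image.2 ⟨(v, v'), Finset.mem_product.2 ⟨hv, hv'⟩, if_neg hne⟩
    have h := Finset.le_max' _ _ hmem
    rw [div_le_iff₀ (by linarith)] at h
    linarith
  -- one-sided Lipschitz bound on g
  have hLip : ∀ y' y : ℝ, ymin ≤ y' → y' ≤ y → y ≤ ymax → g y ≤ g y' + K * (y - y') := by
    intro y' y h1 h2 h3
    obtain ⟨x0, hx0P, hx0⟩ := hslice y (le_trans h1 h2) h3
    rw [hg y]
    refine csSup_le ⟨_, ⟨x0, ⟨hx0P, hx0⟩, rfl⟩⟩ ?_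
    rintro _ ⟨z, ⟨hzP, hzy⟩, rfl⟩
    rcases eq_or_lt_of_le (le_trans h1 h2 : ymin ≤ y) with heq | hlty
    · -- y = ymin, so y' = y
      have hy'e : y' = y := by linarith
      have := hgle z hzP
      rw [hzy] at this
      rw [hy'e]
      linarith
    · -- main case
      -- best vertex at level ymin
      obtain ⟨vm, hvmV, hvm⟩ := Finset.exists_mem_eq_inf' hVne (fun v => β ⬝ᵥ v)
      set V0 : Finset (Fin n → ℝ) := V.filter (fun v => β ⬝ᵥ v = ymin) with hV0def
      have hV0ne : V0.Nonempty := ⟨vm, Finset.mem_filter.2 ⟨hvmV, hvm.symm⟩⟩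
      obtain ⟨vs, hvsV0, hvsmax⟩ := V0.exists_max_image (fun v => β ⬝ᵥ (A.mulVec v + a)) hV0ne
      have hvsV : vs ∈ V := (Finset.mem_filter.1 hvsV0).1
      have hbvs : β ⬝ᵥ vs = ymin := (Finset.mem_filter.1 hvsV0).2
      have hvsP : vs ∈ P := hVP vs hvsV
      -- key termwise bound
      have hkey : β ⬝ᵥ (A.mulVec z + a) - β ⬝ᵥ (A.mulVec vs + a) ≤ K * (y - ymin) := by
        obtain ⟨w, hw0, hw1, hb, hc⟩ := decomp z hzP
        have hbsum : y = ∑ v ∈ V, w v * (β ⬝ᵥ v) := by rw [← hzy, hb]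
        have e1 : ∑ v ∈ V, w v * (β ⬝ᵥ (A.mulVec v + a) - β ⬝ᵥ (A.mulVec vs + a))
            = β ⬝ᵥ (A.mulVec z + a) - β ⬝ᵥ (A.mulVec vs + a) := by
          simp only [mul_sub]
          rw [Finset.sum_sub_distrib, ← hc, ← Finset.sum_mul, hw1, one_mul]
        have e2 : ∑ v ∈ V, w v * (K * (β ⬝ᵥ v - ymin)) = K * (y - ymin) := by
          calc ∑ v ∈ V, w v * (K * (β ⬝ᵥ v - ymin))
              = ∑ v ∈ V, (K * (w v * (β ⬝ᵥ v)) - (K * ymin) * w v) :=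
                Finset.sum_congr rfl fun v _ => by ring
            _ = K * (∑ v ∈ V, w v * (β ⬝ᵥ v)) - (K * ymin) * (∑ v ∈ V, w v) := by
                rw [Finset.sum_sub_distrib, ← Finset.mul_sum, ← Finset.mul_sum]
            _ = K * (y - ymin) := by rw [← hbsum, hw1]; ring
        rw [← e1, ← e2]
        refine Finset.sum_le_sum fun v hv => mul_le_mul_of_nonneg_left ?_ (hw0 v hv)
        rcases eq_or_lt_of_le (Finset.inf'_le (fun v => β ⬝ᵥ v) hv : ymin ≤ β ⬝ᵥ v)
          with heqv | hltv
        · have hvV0 : v ∈ V0 := Finset.mem_filter.2 ⟨hv, heqv.symm⟩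
          have := hvsmax v hvV0
          have hrhs : K * (β ⬝ᵥ v - ymin) = 0 := by rw [← heqv]; ring
          linarith
        · have := hKs v hv vs hvsV (by rw [hbvs]; exact hltv)
          rw [hbvs] at this
          exact this
      -- construct the comparison point x'
      set θ : ℝ := (y - y') / (y - ymin) with hθdef
      have hθ0 : 0 ≤ θ := div_nonneg (by linarith) (by linarith)
      have hθ1 : θ ≤ 1 := (div_le_one (by linarith)).2 (by linarith)
      have hθy : θ * (y - ymin) = y - y' := div_mul_cancel₀ _ (by linarith)
      set z' : Fin n → ℝ := (1 - θ) • z + θ • vs with hz'def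
      have hz'P : z' ∈ P := hPconv hzP hvsP (by linarith) hθ0 (by ring)
      have hbz' : β ⬝ᵥ z' = y' := by
        rw [hz'def, dotProduct_add, dotProduct_smul, dotProduct_smul]
        simp only [smul_eq_mul]
        rw [hzy, hbvs]
        nlinarith [hθy]
      have hcz' : β ⬝ᵥ (A.mulVec z' + a)
          = (1 - θ) * (β ⬝ᵥ (A.mulVec z + a)) + θ * (β ⬝ᵥ (A.mulVec vs + a)) := by
        have hsplit : A.mulVec z' + a
            = (1 - θ) • (A.mulVec z + a) + θ • (A.mulVec vs + a) := by
          rw [hz'def, Matrix.mulVec_add, Matrix.mulVec_smul, Matrix.mulVec_smul]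
          funext i
          simp only [Pi.add_apply, Pi.smul_apply, smul_eq_mul]
          ring
        rw [hsplit, dotProduct_add, dotProduct_smul, dotProduct_smul]
        simp [smul_eq_mul]
      have hgz' : β ⬝ᵥ (A.mulVec z' + a) ≤ g y' := by
        have := hgle z' hz'P
        rwa [hbz'] at this
      -- combine
      have hstep : θ * (β ⬝ᵥ (A.mulVec z + a) - β ⬝ᵥ (A.mulVec vs + a)) ≤ K * (y - y') := by
        calc θ * (β ⬝ᵥ (A.mulVec z + a) - β ⬝ᵥ (A.mulVec vs + a))
            ≤ θ * (K * (y - ymin)) := mul_le_mul_of_nonneg_left hkey hθ0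
          _ = K * (θ * (y - ymin)) := by ring
          _ = K * (y - y') := by rw [hθy]
      nlinarith [hgz', hcz', hstep]
  -- derivative of the β-component of the trajectory
  have hξ : ∀ t ∈ Icc (0:ℝ) T, HasDerivAt (fun s => β ⬝ᵥ x s) (β ⬝ᵥ (A.mulVec (x t) + a)) t := by
    intro t ht
    have h1 := ((dotLin β).toContinuousLinearMap.hasFDerivAt
      (x := x t)).comp_hasDerivAt t (hx t ht)
    have h2 : (dotLin β).toContinuousLinearMap (A.mulVec (x t) + a + B.mulVec (u t))
        = β ⬝ᵥ (A.mulVec (x t) + a) := by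
      show dotLin β _ = _
      simp only [dotLin, LinearMap.coe_mk, AddHom.coe_mk]
      rw [dotProduct_add, hβB, add_zero]
    rw [h2] at h1
    exact h1
  have hξc : ContinuousOn (fun s => β ⬝ᵥ x s) (Icc (0:ℝ) T) := fun t ht =>
    (hξ t ht).continuousAt.continuousWithinAt
  have hξd : ∀ s ∈ Ico (0:ℝ) T, HasDerivWithinAt (fun s => β ⬝ᵥ x s)
      (β ⬝ᵥ (A.mulVec (x s) + a)) (Ici s) s := fun s hs =>
    (hξ s (Ico_subset_Icc_self hs)).hasDerivWithinAt
  have hξle : ∀ s ∈ Ico (0:ℝ) T, β ⬝ᵥ (A.mulVec (x s) + a) ≤ g (β ⬝ᵥ x s) := fun s hs =>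
    hgle (x s) (hxP s (Ico_subset_Icc_self hs))
  have hξmax : ∀ s ∈ Ico (0:ℝ) T, β ⬝ᵥ x s ≤ ymax := fun s hs =>
    hymaxP (x s) (hxP s (Ico_subset_Icc_self hs))
  have hφc : ContinuousOn φ (Icc (0:ℝ) T) := fun t ht =>
    (hφ t ht).continuousAt.continuousWithinAt
  have hφ0min : ymin ≤ φ 0 := by
    rw [hφ0]; exact hyminP (x 0) (hxP 0 h0T)
  have hφmin : ∀ t ∈ Icc (0:ℝ) T, ymin ≤ φ t :=
    fence_min g φ T ymin hφ hφc hφ0min hg0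
  constructor
  · exact fence_main g (fun s => β ⬝ᵥ x s) φ (fun s => β ⬝ᵥ (A.mulVec (x s) + a))
      (fun s => g (φ s)) T K ymin ymax hK0 hξc hξd hξle hξmax hLip hφc
      (fun s hs => (hφ s (Ico_subset_Icc_self hs)).hasDerivWithinAt)
      (le_of_eq hφ0.symm)
      (fun s hs => hφmin s (Ico_subset_Icc_self hs))
      (fun s _ => le_refl _)
  · rintro ystar ⟨z, hzP, hzy⟩ hgy hx0y
    exact fence_main g (fun s => β ⬝ᵥ x s) (fun _ => ystar)
      (fun s => β ⬝ᵥ (A.mulVec (x s) + a)) (fun _ => 0) T K ymin ymax hK0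
      hξc hξd hξle hξmax hLip continuousOn_const
      (fun s _ => hasDerivWithinAt_const s _ ystar)
      hx0y
      (fun s _ => by rw [← hzy]; exact hyminP z hzP)
      (fun s _ => hgy)
end
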